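/- Let T : Z → Z be a measure-preserving transformation of a probability space and let W^s and W^u be two partitions of Z (into 'stable' and 'unstable' sets). Suppose a measurable function ψ : Z → ℝ is equal a.e. to a function constant on the elements of W^s, and also equal a.e. to a function constant on the elements of W^u, and suppose that the only sets that are (mod 0) unions of W^s-elements and simultaneously (mod 0) unions of W^u-elements have measure 0 or 1 (joint ergodicity of the pair of partitions). Then ψ is a.e. constant. -/
import Mathlib


open MeasureTheory

/-- A set `A` is (mod 0) a union of elements of the partition given by the setoid `P`:
it agrees, up to a `ν`-null set, with a set saturated for `P`. -/
def IsMod0Saturated {Z : Type*} [MeasurableSpace Z] (ν : Measure Z) (P : Setoid Z)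
    (A : Set Z) : Prop :=
  ∃ B : Set Z, (∀ x y : Z, P.r x y → (x ∈ B ↔ y ∈ B)) ∧ ν (symmDiff A B) = 0

/-- A function `ψ` is a.e. equal to a function constant on the elements of the partition
given by the setoid `P`. -/
def IsMod0ConstOnPieces {Z : Type*} [MeasurableSpace Z] (ν : Measure Z) (P : Setoid Z)
    (ψ : Z → ℝ) : Prop :=
  ∃ g : Z → ℝ, (∀ x y : Z, P.r x y → g x = g y) ∧ ψ =ᵐ[ν] g

lemma saturated_sublevel {Z : Type*} [MeasurableSpace Z] (ν : Measure Z) (P : Setoid Z)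
    (ψ : Z → ℝ) (h : IsMod0ConstOnPieces ν P ψ) (t : ℝ) :
    IsMod0Saturated ν P {x | ψ x < t} := by
  obtain ⟨g, hg, hae⟩ := h
  refine ⟨{x | g x < t}, fun x y hxy => by simp [hg x y hxy], ?_⟩
  refine measure_mono_null ?_ (ae_iff.mp hae)
  intro x hx
  simp only [Set.mem_symmDiff, Set.mem_setOf_eq] at hx
  simp only [Set.mem_setOf_eq]
  intro hxe
  rw [hxe] at hx
  tauto

/-- The abstract Hopf argument: if a measurable function is a.e. constant on the elements of a
'stable' partition `Ws` and a.e. constant on the elements of an 'unstable' partition `Wu`, and the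
pair of partitions is jointly ergodic (any measurable set which is mod 0 a union of `Ws`-elements
and mod 0 a union of `Wu`-elements has measure `0` or `1`), then the function is a.e. constant. -/
theorem hopf_argument {Z : Type*} [MeasurableSpace Z] (ν : Measure Z)
    [IsProbabilityMeasure ν] (T : Z → Z) (hT : MeasurePreserving T ν ν)
    (Ws Wu : Setoid Z) (ψ : Z → ℝ) (hψ : Measurable ψ)
    (hs : IsMod0ConstOnPieces ν Ws ψ) (hu : IsMod0ConstOnPieces ν Wu ψ)
    (herg : ∀ A : Set Z, MeasurableSet A → IsMod0Saturated ν Ws A →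
      IsMod0Saturated ν Wu A → ν A = 0 ∨ ν A = 1) :
    ∃ c : ℝ, ψ =ᵐ[ν] fun _ => c := by
  have hmeas : ∀ t : ℝ, MeasurableSet {x | ψ x < t} := fun t =>
    hψ measurableSet_Iio
  have h01 : ∀ t : ℝ, ν {x | ψ x < t} = 0 ∨ ν {x | ψ x < t} = 1 := fun t =>
    herg _ (hmeas t) (saturated_sublevel ν Ws ψ hs t) (saturated_sublevel ν Wu ψ hu t)
  set S : Set ℝ := {t | ν {x | ψ x < t} = 1} with hS
  -- S is nonempty
  have hSne : S.Nonempty := by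
    by_contra hne
    have hall : ∀ n : ℕ, ν {x | ψ x < n} = 0 := by
      intro n
      rcases h01 n with h | h
      · exact h
      · rw [Set.not_nonempty_iff_eq_empty, Set.eq_empty_iff_forall_notMem] at hne
        exact absurd h (hne _)
    have hcover : (Set.univ : Set Z) ⊆ ⋃ n : ℕ, {x | ψ x < n} := by
      intro x _
      obtain ⟨n, hn⟩ := exists_nat_gt (ψ x)
      exact Set.mem_iUnion.mpr ⟨n, hn⟩
    have : ν (Set.univ : Set Z) = 0 :=
      measure_mono_null hcover (measure_iUnion_null hall)
    simp at this
  -- S is bounded below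
  have hSbdd : BddBelow S := by
    by_contra hbdd
    have hall : ∀ n : ℕ, ν {x | ψ x < -(n : ℝ)} = 1 := by
      intro n
      rcases h01 (-(n : ℝ)) with h | h
      · exfalso
        apply hbdd
        refine ⟨-(n : ℝ), fun s hs' => ?_⟩
        by_contra hlt
        push_neg at hlt
        have hsub : {x | ψ x < s} ⊆ {x | ψ x < -(n : ℝ)} :=
          fun x hx => lt_trans hx hlt
        have := measure_mono_null hsub h
        rw [hs'] at this
        exact one_ne_zero this
      · exact h
    have hcompl : ∀ n : ℕ, ν {x | ψ x < -(n : ℝ)}ᶜ = 0 := by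
      intro n
      rw [prob_compl_eq_zero_iff (hmeas _)]
      exact hall n
    have hcover : (Set.univ : Set Z) ⊆ ⋃ n : ℕ, {x | ψ x < -(n : ℝ)}ᶜ := by
      intro x _
      obtain ⟨n, hn⟩ := exists_nat_gt (-(ψ x))
      refine Set.mem_iUnion.mpr ⟨n, ?_⟩
      simp only [Set.mem_compl_iff, Set.mem_setOf_eq, not_lt]
      linarith
    have : ν (Set.univ : Set Z) = 0 :=
      measure_mono_null hcover (measure_iUnion_null hcompl)
    simp at this
  set c := sInf S with hc
  refine ⟨c, ?_⟩
  -- the "below" part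
  have hbelow : ν {x | ψ x < c} = 0 := by
    have hsub : {x | ψ x < c} ⊆ ⋃ q : ℚ, ⋃ _ : (q : ℝ) < c, {x | ψ x < q} := by
      intro x hx
      simp only [Set.mem_setOf_eq] at hx
      obtain ⟨q, hq1, hq2⟩ := exists_rat_btwn hx
      exact Set.mem_iUnion.mpr ⟨q, Set.mem_iUnion.mpr ⟨hq2, hq1⟩⟩
    refine measure_mono_null hsub (measure_iUnion_null fun q => ?_)
    refine measure_iUnion_null fun hq => ?_
    rcases h01 (q : ℝ) with h | h
    · exact h
    · exact absurd (csInf_le hSbdd h) (not_le.mpr hq)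
  -- the "above" part
  have habove : ν {x | c < ψ x} = 0 := by
    have hsub : {x | c < ψ x} ⊆ ⋃ q : ℚ, ⋃ _ : c < (q : ℝ), {x | ¬ ψ x < q} := by
      intro x hx
      simp only [Set.mem_setOf_eq] at hx
      obtain ⟨q, hq1, hq2⟩ := exists_rat_btwn hx
      exact Set.mem_iUnion.mpr ⟨q, Set.mem_iUnion.mpr ⟨hq1, not_lt.mpr (le_of_lt hq2)⟩⟩
    refine measure_mono_null hsub (measure_iUnion_null fun q => ?_)
    refine measure_iUnion_null fun hq => ?_
    obtain ⟨s, hsS, hslt⟩ := exists_lt_of_csInf_lt hSne hq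
    have hone : ν {x | ψ x < (q : ℝ)} = 1 := by
      have hsub2 : {x | ψ x < s} ⊆ {x | ψ x < (q : ℝ)} :=
        fun x hx => lt_trans hx hslt
      have hle := measure_mono (μ := ν) hsub2
      have hsS' : ν {x | ψ x < s} = 1 := hsS
      rw [hsS'] at hle
      exact le_antisymm prob_le_one hle
    have : {x | ¬ ψ x < (q : ℝ)} = {x | ψ x < (q : ℝ)}ᶜ := rfl
    rw [this, prob_compl_eq_zero_iff (hmeas _)]
    exact hone
  have : ν ({x | ψ x = c}ᶜ) = 0 := by
    refine measure_mono_null ?_ (measure_union_null hbelow habove)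
    intro x hx
    simp only [Set.mem_compl_iff, Set.mem_setOf_eq] at hx
    rcases lt_or_gt_of_ne hx with h | h
    · exact Or.inl h
    · exact Or.inr h
  filter_upwards [measure_eq_zero_iff_ae_notMem.mp this] with x hx
  simpa using hx
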